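/- arXiv:2410.22745 — 4 statements merged into one kernel-verified Lean document; each statement's English description precedes it below -/
import Mathlib

section
/- Let p be an odd prime, let P be a finite non-abelian p-group, and let N be a cyclic normal subgroup of P such that P/N is cyclic. Then there exists a group homomorphism lambda : N -> C^x whose stabilizer {g in P : lambda(g n g^{-1}) = lambda(n) for all n in N} under the conjugation action of P has index exactly p in P. -/
/-!
Let `χ` be a faithful character of `N` and `Hᵢ` the stabilizer of `χ ^ p ^ i`. Then `H₀` is the
centralizer of `N`, which is proper: if `N` were central, `P/N` cyclic would make `P` abelian.
Once `p ^ r = |N|` we have `χ ^ p ^ r = 1`, so `Hᵣ = P`. Each `Hᵢ` has index at most `p` in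
`Hᵢ₊₁`, because on `Hᵢ₊₁` the map `g ↦ (χ ∘ conj g⁻¹) / χ` is constant exactly on the cosets of
`Hᵢ` and takes values in the characters of order dividing `p`, and a cyclic group has at most
`p` of those. As `P` is a `p`-group, the last `Hᵢ` that is not all of `P` has index exactly `p`.
-/

open Subgroup

section CharStabilizer

variable {G N M : Type*} [Group G] [Group N]

def charStabilizer [Monoid M] (φ : G →* MulAut N) (χ : N →* M) : Subgroup G where
  carrier := {g | ∀ n, χ (φ g n) = χ n}
  one_mem' n := by simp
  mul_mem' {a b} ha hb n := by simp [ha (φ b n), hb n]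
  inv_mem' {g} hg n := by simpa [map_inv] using (hg ((φ g)⁻¹ n)).symm

theorem mem_charStabilizer [Monoid M] {φ : G →* MulAut N} {χ : N →* M} {g : G} :
    g ∈ charStabilizer φ χ ↔ ∀ n, χ (φ g n) = χ n :=
  Iff.rfl

theorem charStabilizer_eq_ker [Monoid M] (φ : G →* MulAut N) {χ : N →* M}
    (hχ : Function.Injective χ) : charStabilizer φ χ = φ.ker := by
  ext g
  rw [mem_charStabilizer, MonoidHom.mem_ker]
  exact ⟨fun h => MulEquiv.ext fun n => hχ (h n), fun h n => by rw [h]; rfl⟩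

theorem charStabilizer_one [Monoid M] (φ : G →* MulAut N) :
    charStabilizer φ (1 : N →* M) = ⊤ :=
  eq_top_iff.mpr fun _ _ _ => rfl

theorem inv_mul_mem_charStabilizer_iff [Monoid M] (φ : G →* MulAut N) (χ : N →* M) (a b : G) :
    a⁻¹ * b ∈ charStabilizer φ χ ↔ ∀ n, χ (φ a⁻¹ n) = χ (φ b⁻¹ n) := by
  refine ⟨fun h n => ?_, fun h n => ?_⟩
  · simpa [map_inv] using h ((φ b)⁻¹ n)
  · simpa [map_inv] using h (φ b n)

theorem MonoidHom.eq_of_apply_generator_eq [Group M] {g : N} (hg : ∀ x, x ∈ zpowers g)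
    {μ ν : N →* M} (h : μ g = ν g) : μ = ν := by
  ext x
  obtain ⟨k, rfl⟩ := mem_zpowers_iff.mp (hg x)
  simp [map_zpow, h]

theorem relIndex_charStabilizer_pow_le [IsCyclic N] {R : Type*} [CommRing R] [IsDomain R]
    (φ : G →* MulAut N) (χ : N →* Rˣ) (p : ℕ) [NeZero p] :
    (charStabilizer φ χ).relIndex (charStabilizer φ (χ ^ p)) ≤ p := by
  obtain ⟨g₀, hg₀⟩ := IsCyclic.exists_generator (α := N)
  set H := charStabilizer φ χ
  set K := charStabilizer φ (χ ^ p)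
  -- the character `(χ ∘ φ g⁻¹) / χ`, read off at the generator `g₀`
  let twist : K → rootsOfUnity p R := fun g =>
    ⟨χ (φ g⁻¹ g₀) / χ g₀, by simpa [mem_rootsOfUnity, div_pow, div_eq_one] using (g⁻¹).2 g₀⟩
  have twist_eq_iff (a b : K) : twist a = twist b ↔ a⁻¹ * b ∈ H.subgroupOf K := by
    rw [mem_subgroupOf, coe_mul, coe_inv, inv_mul_mem_charStabilizer_iff, Subtype.ext_iff]
    simp only [twist, div_left_inj]
    refine ⟨fun h n => ?_, fun h => h g₀⟩
    have := MonoidHom.eq_of_apply_generator_eq hg₀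
      (μ := χ.comp (φ (↑a)⁻¹).toMonoidHom) (ν := χ.comp (φ (↑b)⁻¹).toMonoidHom) h
    exact DFunLike.congr_fun this n
  calc H.relIndex K = Nat.card (K ⧸ H.subgroupOf K) := rfl
    _ ≤ Nat.card (rootsOfUnity p R) :=
      Nat.card_le_card_of_injective
        (Quotient.lift twist fun a b hab =>
          (twist_eq_iff a b).mpr (QuotientGroup.leftRel_apply.mp hab))
        (Quotient.ind₂ fun a b hab =>
          Quotient.sound (QuotientGroup.leftRel_apply.mpr ((twist_eq_iff a b).mp hab)))
    _ ≤ p := card_rootsOfUnity R p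

end CharStabilizer

theorem IsPGroup.exists_index_eq_of_relIndex_succ_le {p : ℕ} [Fact p.Prime] {G : Type*}
    [Group G] [Finite G] (hG : IsPGroup p G) (H : ℕ → Subgroup G) (h0 : H 0 ≠ ⊤)
    (htop : ∃ r, H r = ⊤) (hstep : ∀ i, (H i).relIndex (H (i + 1)) ≤ p) :
    ∃ i, (H i).index = p := by
  classical
  obtain ⟨j, hfind⟩ : ∃ j, Nat.find htop = j + 1 :=
    Nat.exists_eq_succ_of_ne_zero fun h => h0 (h ▸ Nat.find_spec htop)
  have hsucc : H (j + 1) = ⊤ := hfind ▸ Nat.find_spec htop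
  have hj : H j ≠ ⊤ := Nat.find_min htop (by omega)
  obtain ⟨m, hm⟩ := hG.index (H j)
  have hle : p ^ m ≤ p ^ 1 := by
    rw [← hm, pow_one, ← relIndex_top_right, ← hsucc]
    exact hstep j
  have hm0 : m ≠ 0 := by
    rintro rfl
    exact hj (index_eq_one.mp hm)
  have hm1 : m = 1 := by
    have := (Nat.pow_le_pow_iff_right (Fact.out : p.Prime).one_lt).mp hle
    omega
  exact ⟨j, by rw [hm, hm1, pow_one]⟩

theorem IsCyclic.exists_injective_monoidHom_units_complex (N : Type*) [Group N] [Finite N]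
    [IsCyclic N] : ∃ χ : N →* ℂˣ, Function.Injective χ := by
  have : NeZero (Nat.card N) := ⟨Nat.card_pos.ne'⟩
  let e := mulEquivOfCyclicCardEq (Complex.card_rootsOfUnity (Nat.card N)).symm
  exact ⟨(rootsOfUnity (Nat.card N) ℂ).subtype.comp e.toMonoidHom,
    Subtype.val_injective.comp e.injective⟩

theorem ker_conjNormal_ne_top {P : Type*} [Group P] (hnab : ¬ ∀ a b : P, a * b = b * a)
    {N : Subgroup P} [N.Normal] [IsCyclic (P ⧸ N)] :
    (MulAut.conjNormal : P →* MulAut N).ker ≠ ⊤ := by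
  intro htop
  have hcenter : N ≤ center P := fun n hn => mem_center_iff.mpr fun g => by
    have hg : MulAut.conjNormal g = (1 : MulAut N) := by
      rw [← MonoidHom.mem_ker, htop]
      exact mem_top g
    have := congrArg Subtype.val (DFunLike.congr_fun hg ⟨n, hn⟩)
    rw [MulAut.conjNormal_apply] at this
    exact mul_inv_eq_iff_eq_mul.mp this
  exact hnab ((QuotientGroup.mk' N).isMulCommutative_of_isCyclic_of_ker_le_center
    (by rwa [QuotientGroup.ker_mk'])).is_comm.comm

/-- Let `p` be an odd prime, `P` a finite non-abelian `p`-group and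
`N` a cyclic normal subgroup of `P` with cyclic quotient `P/N`. Then there is a
homomorphism `lam : N → ℂˣ` whose stabilizer
`{g ∈ P | lam (g n g⁻¹) = lam n for all n ∈ N}` under the conjugation action of `P`
has index exactly `p` in `P`. -/
theorem exists_character_with_stabilizer_of_index_p
    (p : ℕ) (hp : p.Prime)
    (P : Type*) [Group P] [Finite P] (hP : IsPGroup p P)
    (hnab : ¬ ∀ a b : P, a * b = b * a)
    (N : Subgroup P) (hN : N.Normal) (hNcyc : IsCyclic N)
    (hQcyc : @IsCyclic (P ⧸ N) (@ZPow.toPow _ (@DivInvMonoid.toZPow _ (@Group.toDivInvMonoid _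
      (@QuotientGroup.Quotient.group P _ N hN))))) :
    ∃ lam : N →* ℂˣ,
      Subgroup.index
        { carrier := {g : P | ∀ n : N, lam ⟨g * (n : P) * g⁻¹, hN.conj_mem n n.2 g⟩ = lam n}
          one_mem' := by
            intro n
            congr 1
            ext
            simp
          mul_mem' := by
            intro a b ha hb n
            have h1 := ha ⟨b * (n : P) * b⁻¹, hN.conj_mem n n.2 b⟩
            have h2 := hb n
            have key : lam ⟨a * b * (n : P) * (a * b)⁻¹,
                hN.conj_mem n n.2 (a * b)⟩ =
                lam ⟨a * (b * (n : P) * b⁻¹) * a⁻¹,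
                  hN.conj_mem _ (hN.conj_mem n n.2 b) a⟩ := by
              congr 1
              ext
              group
            exact key.trans (h1.trans h2)
          inv_mem' := by
            intro g hg n
            have h1 := hg ⟨g⁻¹ * (n : P) * g⁻¹⁻¹, hN.conj_mem n n.2 g⁻¹⟩
            have key : lam ⟨g * (g⁻¹ * (n : P) * g⁻¹⁻¹) * g⁻¹,
                hN.conj_mem _ (hN.conj_mem n n.2 g⁻¹) g⟩ = lam n := by
              congr 1
              ext
              group
            rw [key] at h1
            exact h1.symm } = p := by
  have : Fact p.Prime := ⟨hp⟩
  obtain ⟨χ, hχ⟩ := IsCyclic.exists_injective_monoidHom_units_complex N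
  obtain ⟨r, hr⟩ := (hP.to_subgroup N).exists_card_eq
  set H : ℕ → Subgroup P := fun i => charStabilizer MulAut.conjNormal (χ ^ p ^ i)
  have h0 : H 0 ≠ ⊤ := by
    have : χ ^ p ^ 0 = χ := pow_one χ
    simpa only [H, this, charStabilizer_eq_ker _ hχ] using ker_conjNormal_ne_top (N := N) hnab
  have htop : H r = ⊤ := by
    have : χ ^ p ^ r = 1 := MonoidHom.ext fun n => by
      rw [MonoidHom.pow_apply, ← map_pow, ← hr, pow_card_eq_one', map_one, MonoidHom.one_apply]
    simp only [H, this, charStabilizer_one]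
  have hstep (i : ℕ) : (H i).relIndex (H (i + 1)) ≤ p := by
    have : χ ^ p ^ (i + 1) = (χ ^ p ^ i) ^ p := pow_succ p i ▸ pow_mul χ _ _
    simp only [H, this]
    exact relIndex_charStabilizer_pow_le _ (χ ^ p ^ i) p
  obtain ⟨i, hi⟩ := hP.exists_index_eq_of_relIndex_succ_le H h0 ⟨r, htop⟩ hstep
  -- the stabilizer in the statement is `H i` unfolded
  exact ⟨χ ^ p ^ i, hi⟩
end

section
/- Let p be an odd prime, let C be a finite cyclic p-group, let A be a p-subgroup of the automorphism group Aut(C), and let theta : C -> C^x be a group homomorphism whose orbit under the action of A has cardinality p^a with a >= 1. Then the orbit of the homomorphism theta^p (the pointwise p-th power of theta) under A has cardinality exactly p^{a-1}. -/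
/-! Let `H ≤ K` be the stabilizers of `θ` and `θ ^ p` in `A`; the two orbits have sizes `[A : H]`
and `[A : K]`. The `K`-orbit of `θ` lies in `θ` times the `p`-torsion of `Hom(C, ℂˣ)`, which has at
most `p` elements because `C` is cyclic, so `[K : H] ≤ p`. Every `σ ∈ Aut(C)` acts on `Hom(C, ℂˣ)`
as a power map `ψ ↦ ψ ^ u`, and since the order of `θ` is a power of the odd prime `p`, lifting the
exponent turns `θ ^ (u ^ p) = θ` into `θ ^ (p * u) = θ ^ p`: thus `σ ^ p ∈ H` implies `σ ∈ K`.
As `A` is a `p`-group and `H ≠ A`, some `σ ∉ H` has `σ ^ p ∈ H`, so `[K : H] = p`. -/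

open MulAction

theorem Int.prime_pow_dvd_mul_sub_one_of_dvd_pow_sub_one {p : ℕ} (hp : p.Prime) (hodd : Odd p)
    {u : ℤ} {m : ℕ} (h : (p : ℤ) ^ m ∣ u ^ p - 1) : (p : ℤ) ^ m ∣ p * (u - 1) := by
  have := Fact.mk hp
  rcases m.eq_zero_or_pos with rfl | hm
  · simp
  have hu : (p : ℤ) ∣ u - 1 := by
    have h' := (ZMod.intCast_zmod_eq_zero_iff_dvd _ p).2 ((dvd_pow_self _ hm.ne').trans h)
    push_cast at h'
    rw [ZMod.pow_card] at h'
    exact (ZMod.intCast_zmod_eq_zero_iff_dvd _ p).1 (by push_cast; exact h')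
  have hnu : ¬ (p : ℤ) ∣ u := fun hpu =>
    (Nat.prime_iff_prime_int.mp hp).not_dvd_one (by simpa using dvd_sub hpu hu)
  have hval : emultiplicity (p : ℤ) (u ^ p - 1) = emultiplicity (p : ℤ) (p * (u - 1)) := by
    have lte := Int.emultiplicity_pow_sub_pow hp hodd (y := 1) hu hnu p
    rw [one_pow] at lte
    rw [lte, emultiplicity_mul (Nat.prime_iff_prime_int.mp hp), Int.natCast_emultiplicity,
      hp.emultiplicity_self, add_comm]
  rwa [pow_dvd_iff_le_emultiplicity, ← hval, ← pow_dvd_iff_le_emultiplicity]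

section PGroup

variable {p : ℕ} [hp : Fact p.Prime] {G : Type*} [Group G] [Finite G]

theorem IsPGroup.exists_notMem_pow_mem (hG : IsPGroup p G) {H : Subgroup G} (hH : H ≠ ⊤) :
    ∃ g : G, g ∉ H ∧ g ^ p ∈ H := by
  have := hG.isNilpotent
  set N := Subgroup.normalizer (H : Set G)
  have hlt : H < N := Group.normalizerCondition_of_isNilpotent H (lt_top_iff_ne_top.mpr hH)
  have : (H.subgroupOf N).Normal := Subgroup.normal_in_normalizer
  have hdvd : p ∣ Nat.card (N ⧸ H.subgroupOf N) := by
    refine ((hG.to_subgroup N).to_quotient _).card_eq_or_dvd.resolve_left fun h => ?_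
    exact hlt.not_ge (Subgroup.subgroupOf_eq_top.mp (Subgroup.index_eq_one.mp h))
  obtain ⟨q, hq⟩ := exists_prime_orderOf_dvd_card' p hdvd
  obtain ⟨g, rfl⟩ := QuotientGroup.mk_surjective q
  refine ⟨g, fun hg => ?_, ?_⟩
  · rw [(QuotientGroup.eq_one_iff g).2 (Subgroup.mem_subgroupOf.2 hg), orderOf_one] at hq
    exact hp.out.one_lt.ne hq
  · have h1 : ((g ^ p : N) : N ⧸ H.subgroupOf N) = 1 := by
      rw [QuotientGroup.mk_pow, ← hq, pow_orderOf_eq_one]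
    exact Subgroup.mem_subgroupOf.1 ((QuotientGroup.eq_one_iff _).1 h1)

theorem Subgroup.index_eq_prime_pow_pred (hG : IsPGroup p G) {H K : Subgroup G} (hHK : H ≤ K)
    (hrel : H.relIndex K ≤ p) (hpow : ∀ g : G, g ^ p ∈ H → g ∈ K) {a : ℕ}
    (hH : H.index = p ^ a) : K.index = p ^ (a - 1) := by
  have hmul := relIndex_mul_index hHK
  obtain _ | a := a
  · rw [pow_zero, index_eq_one] at hH ⊢
    exact top_le_iff.mp (hH ▸ hHK)
  have hHtop : H ≠ ⊤ := fun h => by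
    rw [h, index_top] at hH
    exact (Nat.one_lt_pow a.succ_ne_zero hp.out.one_lt).ne hH
  obtain ⟨g, hgH, hgp⟩ := hG.exists_notMem_pow_mem hHtop
  have hr : H.relIndex K = p := by
    obtain ⟨j, -, hj⟩ := (Nat.dvd_prime_pow hp.out).1 (Dvd.intro _ (hmul.trans hH))
    have hj0 : j ≠ 0 := by
      rintro rfl
      exact hgH (relIndex_eq_one.1 (hj.trans (pow_zero p)) (hpow g hgp))
    have hj1 : j ≤ 1 :=
      (Nat.pow_le_pow_iff_right hp.out.one_lt).1 (by rw [pow_one, ← hj]; exact hrel)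
    rw [hj, show j = 1 by omega, pow_one]
  rw [hr, hH, pow_succ'] at hmul
  rw [Nat.add_sub_cancel]
  exact Nat.eq_of_mul_eq_mul_left hp.out.pos hmul

end PGroup

section PowerAction

variable {G X : Type*} [Group G] [CommGroup X] [MulDistribMulAction G X]

theorem MulAction.stabilizer_le_stabilizer_pow (x : X) (n : ℕ) :
    stabilizer G x ≤ stabilizer G (x ^ n) := fun g hg => by
  rw [mem_stabilizer_iff, smul_pow', mem_stabilizer_iff.1 hg]

theorem MulAction.relIndex_stabilizer_pow_le (x : X) (n : ℕ) [Finite {y : X // y ^ n = 1}] :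
    (stabilizer G x).relIndex (stabilizer G (x ^ n)) ≤ Nat.card {y : X // y ^ n = 1} := by
  rw [Subgroup.relIndex, show (stabilizer G x).subgroupOf (stabilizer G (x ^ n)) =
    stabilizer (stabilizer G (x ^ n)) x from rfl, index_stabilizer, ← Nat.card_coe_set_eq]
  -- the orbit of `x` under the stabilizer of `x ^ n` lies in `x` times the `n`-torsion
  refine Nat.card_le_card_of_injective (fun y => ⟨y * x⁻¹, ?_⟩) fun y z h =>
    Subtype.ext (mul_right_cancel (congrArg Subtype.val h))
  obtain ⟨k, hk⟩ := y.2
  rw [mul_pow, ← hk, ← smul_pow', inv_pow]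
  exact mul_inv_eq_one.2 k.2

theorem pow_smul_eq_zpow_pow {g : G} {u : ℤ} (hg : ∀ y : X, g • y = y ^ u) (n : ℕ) (y : X) :
    g ^ n • y = y ^ u ^ n := by
  induction n with
  | zero => simp
  | succ n ih => rw [pow_succ', mul_smul, ih, hg, ← zpow_mul, pow_succ]

theorem MulAction.mem_stabilizer_pow_of_pow_mem {p : ℕ} (hp : p.Prime) (hodd : Odd p) {x : X}
    {N : ℕ} (hx : x ^ p ^ N = 1) {g : G} {u : ℤ} (hg : ∀ y : X, g • y = y ^ u)
    (hgp : g ^ p ∈ stabilizer G x) : g ∈ stabilizer G (x ^ p) := by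
  obtain ⟨m, -, hm⟩ := (Nat.dvd_prime_pow hp).1 (orderOf_dvd_of_pow_eq_one hx)
  have h1 : x ^ (u ^ p - 1) = 1 := by
    rw [zpow_sub_one, ← pow_smul_eq_zpow_pow hg, mem_stabilizer_iff.1 hgp, mul_inv_cancel]
  have h2 : x ^ ((p : ℤ) * (u - 1)) = 1 := by
    refine orderOf_dvd_iff_zpow_eq_one.1 ?_
    rw [hm, Nat.cast_pow]
    exact Int.prime_pow_dvd_mul_sub_one_of_dvd_pow_sub_one hp hodd
      (by exact_mod_cast hm ▸ orderOf_dvd_iff_zpow_eq_one.2 h1)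
  rw [mem_stabilizer_iff, hg, ← zpow_natCast, ← zpow_mul,
    show (p : ℤ) * u = p * (u - 1) + p by ring, zpow_add, h2, one_mul, zpow_natCast]

end PowerAction

namespace MulAut

variable {C : Type*} [Group C]

instance monoidHomMulDistribMulAction (M : Type*) [CommMonoid M] :
    MulDistribMulAction (MulAut C) (C →* M) where
  smul σ ψ := ψ.comp (σ⁻¹ : MulAut C).toMonoidHom
  one_smul _ := rfl
  mul_smul _ _ _ := rfl
  smul_mul _ _ _ := rfl
  smul_one _ := rfl

theorem smul_monoidHom_def {M : Type*} [CommMonoid M] (σ : MulAut C) (ψ : C →* M) :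
    σ • ψ = ψ.comp (σ⁻¹ : MulAut C).toMonoidHom :=
  rfl

theorem exists_smul_monoidHom_eq_zpow [IsCyclic C] (M : Type*) [CommGroup M] (σ : MulAut C) :
    ∃ u : ℤ, ∀ ψ : C →* M, σ • ψ = ψ ^ u := by
  obtain ⟨u, hu⟩ := (σ⁻¹ : MulAut C).toMonoidHom.map_cyclic
  refine ⟨u, fun ψ => MonoidHom.ext fun g => ?_⟩
  rw [smul_monoidHom_def, MonoidHom.comp_apply, hu, map_zpow, MonoidHom.zpow_apply]

end MulAut

theorem IsCyclic.exists_injective_rootsOfUnity (C M : Type*) [Group C] [IsCyclic C]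
    [CommMonoid M] (n : ℕ) :
    ∃ f : {χ : C →* Mˣ // χ ^ n = 1} → rootsOfUnity n M, Function.Injective f := by
  obtain ⟨c, hc⟩ := IsCyclic.exists_generator (α := C)
  refine ⟨fun χ => ⟨χ.1 c, ?_⟩, fun χ ψ h => Subtype.ext (MonoidHom.ext fun g => ?_)⟩
  · rw [mem_rootsOfUnity, ← MonoidHom.pow_apply, χ.2, MonoidHom.one_apply]
  · obtain ⟨k, rfl⟩ := Subgroup.mem_zpowers_iff.mp (hc g)
    rw [map_zpow, map_zpow, show χ.1 c = ψ.1 c from congrArg Subtype.val h]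

theorem MonoidHom.pow_card_eq_one {C M : Type*} [Group C] [Finite C] [CommMonoid M]
    (ψ : C →* M) : ψ ^ Nat.card C = 1 :=
  MonoidHom.ext fun g => by
    rw [MonoidHom.pow_apply, ← map_pow, pow_card_eq_one', map_one, one_apply]

theorem orbit_card_of_pow_p_general
    (p : ℕ) (hp : p.Prime) (hodd : Odd p)
    (C : Type*) [Group C] [Finite C] [IsCyclic C] (hC : IsPGroup p C)
    (A : Subgroup (MulAut C)) (hA : IsPGroup p A)
    (theta : C →* ℂˣ) (a : ℕ)
    (horb : Nat.card
      (Set.range fun σ : A => theta.comp ((σ : MulAut C)⁻¹ : MulAut C).toMonoidHom)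
        = p ^ a) :
    Nat.card
      (Set.range fun σ : A => (theta ^ p).comp ((σ : MulAut C)⁻¹ : MulAut C).toMonoidHom)
        = p ^ (a - 1) := by
  have := Fact.mk hp
  obtain ⟨N, hN⟩ := IsPGroup.iff_card.mp hC
  obtain ⟨f, hf⟩ := IsCyclic.exists_injective_rootsOfUnity C ℂ p
  have := Finite.of_injective f hf
  change Nat.card (orbit A theta) = p ^ a at horb
  change Nat.card (orbit A (theta ^ p)) = p ^ (a - 1)
  rw [Nat.card_coe_set_eq, ← index_stabilizer] at horb ⊢
  refine (stabilizer A theta).index_eq_prime_pow_pred hA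
    (stabilizer_le_stabilizer_pow (G := A) theta p) ?_ (fun σ hσ => ?_) horb
  · exact (relIndex_stabilizer_pow_le (G := A) theta p).trans
      ((Nat.card_le_card_of_injective f hf).trans (Complex.card_rootsOfUnity p).le)
  · obtain ⟨u, hu⟩ := MulAut.exists_smul_monoidHom_eq_zpow ℂˣ (σ : MulAut C)
    exact mem_stabilizer_pow_of_pow_mem hp hodd (hN ▸ theta.pow_card_eq_one) hu hσ

/-- Let `p` be an odd prime, `C` a finite cyclic `p`-group,
`A` a `p`-subgroup of `Aut(C)` and `theta : C → ℂˣ` a homomorphism whose orbit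
under `A` (acting by `σ • θ = θ ∘ σ⁻¹`) has cardinality `p ^ a` with `a ≥ 1`.
Then the orbit of the pointwise `p`-th power `theta ^ p` under `A` has cardinality
exactly `p ^ (a - 1)`. -/
theorem orbit_card_of_pow_p
    (p : ℕ) (hp : p.Prime) (hodd : Odd p)
    (C : Type*) [Group C] [Finite C] [IsCyclic C] (hC : IsPGroup p C)
    (A : Subgroup (MulAut C)) (hA : IsPGroup p A)
    (theta : C →* ℂˣ) (a : ℕ) (ha : 1 ≤ a)
    (horb : Nat.card
      (Set.range fun σ : A => theta.comp ((σ : MulAut C)⁻¹ : MulAut C).toMonoidHom)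
        = p ^ a) :
    Nat.card
      (Set.range fun σ : A => (theta ^ p).comp ((σ : MulAut C)⁻¹ : MulAut C).toMonoidHom)
        = p ^ (a - 1) :=
  orbit_card_of_pow_p_general p hp hodd C hC A hA theta a horb
end

section
/- Let p be a prime, let D be a finite cyclic group, and let tau and gamma be automorphisms of D such that tau has p-power order and gamma has order prime to p. If lambda : D -> C^x is a group homomorphism satisfying lambda of tau = lambda of gamma (composition of maps), then lambda of tau = lambda; that is, lambda is fixed by tau (and equally by gamma). -/
/-
Since `D` is cyclic, `Aut D` is abelian, so `λ ∘ τ = λ ∘ γ` says that `τ γ⁻¹` stabilizes `λ`. The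
orders of the commuting automorphisms `τ` and `γ⁻¹` are coprime, so by the Chinese remainder theorem
some power `(τ γ⁻¹)ⁿ` with `n ≡ 1 mod ord τ` and `n ≡ 0 mod ord γ` equals `τ`; hence `τ` stabilizes
`λ` as well.
-/

theorem IsCyclic.commute_mulAut {G : Type*} [Group G] [IsCyclic G] (σ ρ : MulAut G) :
    Commute σ ρ := by
  obtain ⟨m, hm⟩ := MonoidHom.map_cyclic σ.toMonoidHom
  obtain ⟨n, hn⟩ := MonoidHom.map_cyclic ρ.toMonoidHom
  simp only [MulEquiv.coe_toMonoidHom] at hm hn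
  ext g
  simp only [MulAut.mul_apply, hm, hn, ← zpow_mul, mul_comm]

theorem Commute.exists_pow_mul_eq_left_of_coprime {M : Type*} [Monoid M] {a b : M}
    (hab : Commute a b) (hco : (orderOf a).Coprime (orderOf b)) : ∃ n : ℕ, (a * b) ^ n = a := by
  obtain ⟨n, hna, hnb⟩ := Nat.chineseRemainder hco 1 0
  refine ⟨n, ?_⟩
  rw [hab.mul_pow, pow_eq_pow_of_modEq hna (pow_orderOf_eq_one a),
    pow_eq_pow_of_modEq hnb (pow_orderOf_eq_one b), pow_one, pow_zero, mul_one]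

def MonoidHom.autStabilizer {G M : Type*} [Group G] [MulOneClass M] (f : G →* M) :
    Subgroup (MulAut G) where
  carrier := {σ | ∀ x, f (σ x) = f x}
  mul_mem' {σ ρ} hσ hρ x := (hσ (ρ x)).trans (hρ x)
  one_mem' _ := rfl
  inv_mem' {σ} hσ x := by simpa using (hσ (σ⁻¹ x)).symm

theorem fixed_by_p_automorphism_of_eq_comp_general
    (p : ℕ)
    (D : Type*) [Group D] [IsCyclic D]
    (τ γ : MulAut D) (hτ : ∃ k : ℕ, orderOf τ = p ^ k)
    (hγ : Nat.Coprime (orderOf γ) p)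
    (lam : D →* ℂˣ)
    (h : lam.comp τ.toMonoidHom = lam.comp γ.toMonoidHom) :
    lam.comp τ.toMonoidHom = lam := by
  obtain ⟨k, hk⟩ := hτ
  have hco : (orderOf τ).Coprime (orderOf γ⁻¹) := by
    rw [hk, orderOf_inv]
    exact Nat.Coprime.pow_left k hγ.symm
  obtain ⟨n, hn⟩ := (IsCyclic.commute_mulAut τ γ⁻¹).exists_pow_mul_eq_left_of_coprime hco
  have hstab : τ * γ⁻¹ ∈ lam.autStabilizer := fun x => by
    simpa using DFunLike.congr_fun h (γ⁻¹ x)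
  have hτstab : τ ∈ lam.autStabilizer := hn ▸ pow_mem hstab n
  ext x
  exact congrArg Units.val (hτstab x)

/-- Let `p` be a prime, `D` a finite cyclic group, and `τ, γ`
automorphisms of `D` with `τ` of `p`-power order and `γ` of order prime to `p`.
If a homomorphism `lam : D → ℂˣ` satisfies `lam ∘ τ = lam ∘ γ`, then
`lam ∘ τ = lam`, i.e. `lam` is fixed by `τ`. -/
theorem fixed_by_p_automorphism_of_eq_comp
    (p : ℕ) (hp : p.Prime)
    (D : Type*) [Group D] [Finite D] [IsCyclic D]
    (τ γ : MulAut D) (hτ : ∃ k : ℕ, orderOf τ = p ^ k)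
    (hγ : Nat.Coprime (orderOf γ) p)
    (lam : D →* ℂˣ)
    (h : lam.comp τ.toMonoidHom = lam.comp γ.toMonoidHom) :
    lam.comp τ.toMonoidHom = lam :=
  fixed_by_p_automorphism_of_eq_comp_general p D τ γ hτ hγ lam h
end

section
/- Let d be an even positive integer and let a be 3 or 6. Then the wreath product C_d wr S_a, realized as the semidirect product (Z/dZ)^a ⋊ S_a where the symmetric group S_a acts by permuting the a coordinates of (Z/dZ)^a, has an irreducible complex character whose degree is divisible by 3 but not by 9. -/
open CategoryTheory

/-- The permutation action of `S_a` on `(Z/dZ)^a` (written multiplicatively),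
permuting the coordinates: `σ • f = f ∘ σ⁻¹`. -/
def permWreathAut (d a : ℕ) :
    Equiv.Perm (Fin a) →* MulAut (Fin a → Multiplicative (ZMod d)) :=
  MonoidHom.mk'
    (fun σ =>
      { toFun := fun f => f ∘ σ.symm
        invFun := fun f => f ∘ σ
        left_inv := fun f => by
          funext x
          simp
        right_inv := fun f => by
          funext x
          simp
        map_mul' := fun f g => rfl })
    (fun σ τ => MulEquiv.ext fun f => rfl)

/-- The wreath product `C_d ≀ S_a`, realized as the semidirect product
`(Z/dZ)^a ⋊ S_a` where `S_a` permutes the coordinates. -/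
abbrev wreathProduct (d a : ℕ) : Type :=
  (Fin a → Multiplicative (ZMod d)) ⋊[permWreathAut d a] Equiv.Perm (Fin a)

/-!
The base group `(Z/dZ)^a` acts on `k^a` coordinatewise through a nontrivial character `ψ` of
`Z/dZ`, and `S_a` permutes the coordinates. The resulting monomial representation of degree `a`
is irreducible: an element of the base group that is nontrivial in one coordinate only isolates
that coordinate line inside any nonzero invariant subspace, and `S_a` moves it onto every other
coordinate line. Such a `ψ` exists as soon as `d ≥ 2`, and the degrees `3` and `6` are divisible
by `3` but not by `9`.
-/

universe u v

theorem FDRep.simple_of_forall_mem_invtSubmodule {k : Type u} {G : Type v} [Field k] [Group G]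
    (X : FDRep k G) [Nontrivial X]
    (h : ∀ W ∈ Representation.invtSubmodule X.ρ, W ≠ ⊥ → W = ⊤) :
    Simple X where
  mono_isIso_iff_nonzero {Y} f _ := by
    refine ⟨fun _ hf => ?_, fun hf => ?_⟩
    · subst hf
      obtain ⟨v, hv⟩ := exists_ne (0 : X)
      have hid : 𝟙 X = 0 := by rw [← IsIso.inv_hom_id (0 : Y ⟶ X), Limits.comp_zero]
      exact hv (ConcreteCategory.congr_hom hid v :)
    · have hinj : Function.Injective f := by
        have : Mono ((forget₂ (FGModuleCat k) (ModuleCat k)).map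
          ((Action.forget (FGModuleCat k) G).map f)) := inferInstance
        exact (ModuleCat.mono_iff_injective _).1 this
      have hsurj : LinearMap.range f.hom.hom.hom = ⊤ := by
        refine h _ ((Representation.mem_invtSubmodule X.ρ).2 ?_) ?_
        · rintro g _ ⟨y, rfl⟩
          exact ⟨Y.ρ g y, ConcreteCategory.congr_hom (f.comm g) y⟩
        · intro hr
          apply hf
          ext y
          exact LinearMap.congr_fun (LinearMap.range_eq_bot.1 hr) y
      exact (ConcreteCategory.isIso_iff_bijective f).2 ⟨hinj, LinearMap.range_eq_top.1 hsurj⟩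

theorem ZMod.exists_monoidHom_ne_one {d : ℕ} [NeZero d] (hd : d ≠ 1) :
    ∃ ψ : Multiplicative (ZMod d) →* ℂ, ψ ≠ 1 := by
  have : Nontrivial (ZMod d) := ZMod.nontrivial_iff.2 hd
  obtain ⟨ψ, hψ⟩ := AddChar.exists_apply_ne_zero.2 (one_ne_zero : (1 : ZMod d) ≠ 0)
  exact ⟨ψ.toMonoidHom, fun h => hψ (DFunLike.congr_fun h (.ofAdd 1))⟩

namespace wreathProduct

variable {k : Type u} [Field k] {d a : ℕ}

def monomialRep (ψ : Multiplicative (ZMod d) →* k) (a : ℕ) :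
    Representation k (wreathProduct d a) (Fin a → k) where
  toFun g :=
    { toFun v i := ψ (g.left i) * v (g.right⁻¹ i)
      map_add' v w := by funext i; simp [mul_add]
      map_smul' c v := by funext i; simp [mul_left_comm] }
  map_one' := by ext v i; simp
  map_mul' g h := by
    ext v i
    simp [permWreathAut, mul_assoc]

variable {ψ : Multiplicative (ZMod d) →* k}

theorem monomialRep_inl_apply (f : Fin a → Multiplicative (ZMod d)) (v : Fin a → k)
    (i : Fin a) :
    monomialRep ψ a (.inl f) v i = ψ (f i) * v i :=
  rfl

theorem monomialRep_inr_single (σ : Equiv.Perm (Fin a)) (i : Fin a) (c : k) :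
    monomialRep ψ a (.inr σ) (Pi.single i c) = Pi.single (σ i) c := by
  ext j
  simp [monomialRep, Pi.single_apply, Equiv.symm_apply_eq]

theorem single_mem_of_apply_ne_zero (hψ : ψ ≠ 1) {W : Submodule k (Fin a → k)}
    (hW : W ∈ (monomialRep ψ a).invtSubmodule) {w : Fin a → k} (hw : w ∈ W) {i : Fin a}
    (hi : w i ≠ 0) : Pi.single i 1 ∈ W := by
  obtain ⟨x, hx⟩ : ∃ x, ψ x ≠ 1 := DFunLike.ne_iff.1 hψ
  have hdiff : monomialRep ψ a (.inl (Pi.mulSingle i x)) w - w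
      = ((ψ x - 1) * w i) • Pi.single i 1 := by
    ext j
    rcases eq_or_ne j i with rfl | hj
    · simp [monomialRep_inl_apply, sub_mul]
    · simp [monomialRep_inl_apply, hj]
  have hmem := W.sub_mem ((monomialRep ψ a).mem_invtSubmodule.1 hW (.inl (Pi.mulSingle i x)) hw) hw
  rwa [hdiff, W.smul_mem_iff (mul_ne_zero (sub_ne_zero.2 hx) hi)] at hmem

theorem eq_top_of_mem_invtSubmodule (hψ : ψ ≠ 1) {W : Submodule k (Fin a → k)}
    (hW : W ∈ (monomialRep ψ a).invtSubmodule) (hne : W ≠ ⊥) : W = ⊤ := by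
  obtain ⟨w, hw, hw0⟩ := W.exists_mem_ne_zero_of_ne_bot hne
  obtain ⟨i, hi⟩ := Function.ne_iff.1 hw0
  have hsingle (j : Fin a) : Pi.single j 1 ∈ W := by
    simpa [monomialRep_inr_single] using (monomialRep ψ a).mem_invtSubmodule.1 hW
      (.inr (Equiv.swap i j)) (single_mem_of_apply_ne_zero hψ hW hw hi)
  rw [eq_top_iff, ← (Pi.basisFun k (Fin a)).span_eq, Submodule.span_le]
  rintro _ ⟨j, rfl⟩
  simpa using hsingle j

theorem simple_monomialRep [NeZero a] (hψ : ψ ≠ 1) : Simple (FDRep.of (monomialRep ψ a)) :=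
  FDRep.simple_of_forall_mem_invtSubmodule _ fun _ hW hne => eq_top_of_mem_invtSubmodule hψ hW hne

theorem finrank_monomialRep : Module.finrank k (FDRep.of (monomialRep ψ a)) = a :=
  Module.finrank_fin_fun k

end wreathProduct

/-- Let `d` be an even positive integer and `a ∈ {3, 6}`. Then the
wreath product `C_d ≀ S_a` has an irreducible complex representation whose degree is
divisible by `3` but not by `9`. -/
theorem wreath_product_has_character_of_degree_div_three_not_nine
    (d : ℕ) (hd : 0 < d) (hde : Even d) (a : ℕ) (ha : a = 3 ∨ a = 6) :
    ∃ V : FDRep ℂ (wreathProduct d a), Simple V ∧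
      3 ∣ Module.finrank ℂ V ∧ ¬ 9 ∣ Module.finrank ℂ V := by
  have : NeZero d := ⟨hd.ne'⟩
  have hd1 : d ≠ 1 := by rintro rfl; exact Nat.not_even_one hde
  obtain ⟨ψ, hψ⟩ := ZMod.exists_monoidHom_ne_one hd1
  have : NeZero a := ⟨by omega⟩
  refine ⟨FDRep.of (wreathProduct.monomialRep ψ a), wreathProduct.simple_monomialRep hψ, ?_⟩
  rw [wreathProduct.finrank_monomialRep]
  rcases ha with rfl | rfl <;> decide
end
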